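/- arXiv:2110.02525 — 3 statements merged into one kernel-verified Lean document; each statement's English description precedes it below -/
import Mathlib

section
/- Let K be a finite nonempty index set, z : K → ℝ with z(k) > 0, σ² > 0, and g(p) = ∑_{k∈K} p(k) z(k) + σ². Fix p⁰ with p⁰(k) > 0 for all k and set μ₀ = σ²/g(p⁰), μ_k = p⁰(k) z(k)/g(p⁰), and g̃(p) = (σ²/μ₀)^{μ₀} ∏_{k∈K} (p(k) z(k)/μ_k)^{μ_k}. Then for every j ∈ K the partial derivative of g̃ with respect to p(j), evaluated at p⁰, equals z(j), which is the partial derivative of g with respect to p(j) at p⁰; that is, the gradients of g and g̃ coincide at p⁰. -/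
/-- Gradient matching of the monomial approximation at the expansion point:
with weights `μ₀ = σ²/g(p⁰)`, `μ k = p⁰ k z k / g(p⁰)`, the partial derivative
of `g̃ p = (σ²/μ₀)^{μ₀} ∏ (p k z k / μ k)^{μ k}` with respect to `p j` at `p⁰`
equals `z j`, which is also the partial derivative of `g p = ∑ p k z k + σ²`
at `p⁰`. -/
theorem monomial_approx_gradient_matches
    {K : Type*} [Fintype K] [Nonempty K] [DecidableEq K]
    (z : K → ℝ) (hz : ∀ k, 0 < z k) (σsq : ℝ) (hσ : 0 < σsq)
    (p₀ : K → ℝ) (hp₀ : ∀ k, 0 < p₀ k)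
    (g : (K → ℝ) → ℝ) (hg : ∀ p, g p = ∑ k, p k * z k + σsq)
    (μ₀ : ℝ) (μ : K → ℝ)
    (hμ₀ : μ₀ = σsq / g p₀) (hμ : ∀ k, μ k = p₀ k * z k / g p₀)
    (gtilde : (K → ℝ) → ℝ)
    (hgt : ∀ p, gtilde p = (σsq / μ₀) ^ μ₀ * ∏ k, (p k * z k / μ k) ^ (μ k)) :
    ∀ j : K,
      HasDerivAt (fun t : ℝ => gtilde (Function.update p₀ j t)) (z j) (p₀ j) ∧
      HasDerivAt (fun t : ℝ => g (Function.update p₀ j t)) (z j) (p₀ j) := by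
  intro j
  have hG : 0 < g p₀ := by
    rw [hg]
    have : 0 ≤ ∑ k, p₀ k * z k :=
      Finset.sum_nonneg fun k _ => le_of_lt (mul_pos (hp₀ k) (hz k))
    linarith
  have hGne : g p₀ ≠ 0 := ne_of_gt hG
  have hμj : μ j = p₀ j * z j / g p₀ := hμ j
  have hμjpos : 0 < μ j := by rw [hμj]; exact div_pos (mul_pos (hp₀ j) (hz j)) hG
  set G := g p₀ with hGdef
  set c : ℝ := G / p₀ j with hcdef
  have hcpos : 0 < c := div_pos hG (hp₀ j)
  set A : ℝ := G ^ μ₀ * ∏ k ∈ Finset.univ.erase j, G ^ μ k with hAdef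
  constructor
  · -- gtilde part
    have hfun : (fun t : ℝ => gtilde (Function.update p₀ j t))
        = fun t : ℝ => A * (t * c) ^ μ j := by
      funext t
      rw [hgt, ← Finset.mul_prod_erase _ _ (Finset.mem_univ j)]
      have h1 : σsq / μ₀ = G := by
        rw [hμ₀]
        field_simp
      have h2 : (Function.update p₀ j t j * z j / μ j) = t * c := by
        rw [Function.update_self, hμj, hcdef]
        have hzj := ne_of_gt (hz j)
        have hpj := ne_of_gt (hp₀ j)
        field_simp
      have h3 : ∀ k ∈ Finset.univ.erase j,
          (Function.update p₀ j t k * z k / μ k) ^ μ k = G ^ μ k := by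
        intro k hk
        have hkj : k ≠ j := Finset.ne_of_mem_erase hk
        rw [Function.update_of_ne hkj, hμ k]
        congr 1
        have hzk := ne_of_gt (hz k)
        have hpk := ne_of_gt (hp₀ k)
        field_simp
      rw [h1, h2, Finset.prod_congr rfl h3, hAdef]
      ring
    rw [hfun]
    have hd1 : HasDerivAt (fun t : ℝ => t * c) c (p₀ j) := by
      simpa using (hasDerivAt_id (p₀ j)).mul_const c
    have hbase : p₀ j * c = G := by
      rw [hcdef, ← mul_div_assoc]
      exact mul_div_cancel_left₀ G (ne_of_gt (hp₀ j))
    have hd2 : HasDerivAt (fun t : ℝ => (t * c) ^ μ j)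
        (μ j * (p₀ j * c) ^ (μ j - 1) * c) (p₀ j) := by
      have := (Real.hasDerivAt_rpow_const (p := μ j)
        (Or.inl (by rw [hbase]; exact hGne))).comp (p₀ j) hd1
      exact this.congr_deriv (by ring)
    have hd3 := hd2.const_mul A
    refine hd3.congr_deriv (Eq.symm ?_)
    -- show z j = A * (μ j * (p₀ j * c) ^ (μ j - 1) * c)
    have hsum : μ₀ + ∑ k, μ k = 1 := by
      rw [hμ₀]
      have : ∑ k, μ k = (∑ k, p₀ k * z k) / G := by
        rw [Finset.sum_div]
        exact Finset.sum_congr rfl fun k _ => hμ k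
      rw [this]
      have hGeq : G = ∑ k, p₀ k * z k + σsq := hg p₀
      field_simp
      linarith
    have hAeq : A = G ^ (μ₀ + ∑ k ∈ Finset.univ.erase j, μ k) := by
      rw [hAdef, Real.rpow_add hG, Real.rpow_sum_of_pos hG]
    have hkey : A * G ^ (μ j - 1) = 1 := by
      rw [hAeq, ← Real.rpow_add hG]
      have hsplit : ∑ k, μ k = μ j + ∑ k ∈ Finset.univ.erase j, μ k :=
        (Finset.add_sum_erase _ _ (Finset.mem_univ j)).symm
      have : μ₀ + ∑ k ∈ Finset.univ.erase j, μ k + (μ j - 1) = 0 := by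
        rw [hsplit] at hsum; linarith
      rw [this, Real.rpow_zero]
    rw [hbase]
    have : A * (μ j * G ^ (μ j - 1) * c) = (A * G ^ (μ j - 1)) * (μ j * c) := by ring
    rw [this, hkey, one_mul, hμj, hcdef]
    symm
    field_simp
    rw [mul_comm (p₀ j) (z j)]
    exact mul_div_cancel_right₀ (z j) (hp₀ j).ne'
  · -- g part
    have hfun : (fun t : ℝ => g (Function.update p₀ j t))
        = fun t : ℝ => t * z j + (∑ k ∈ Finset.univ.erase j, p₀ k * z k + σsq) := by
      funext t
      rw [hg, ← Finset.add_sum_erase _ _ (Finset.mem_univ j), Function.update_self]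
      have h3 : ∀ k ∈ Finset.univ.erase j,
          Function.update p₀ j t k * z k = p₀ k * z k := fun k hk => by
        rw [Function.update_of_ne (Finset.ne_of_mem_erase hk)]
      rw [Finset.sum_congr rfl h3]
      ring
    rw [hfun]
    simpa using ((hasDerivAt_id (p₀ j)).mul_const (z j)).add_const (∑ k ∈ Finset.univ.erase j, p₀ k * z k + σsq)
end

section
/- Let K be a finite index set, fix k ∈ K, let p : K → ℝ with p(k') > 0 for all k', let z : K × K → ℝ with z(k,k') ≥ 0 and z(k,k) > 0, let σ² > 0, and let γ > 0. Define D_k(p) = ∑_{k' ≠ k} p(k') z(k,k') + σ², g_k(p) = ∑_{k' ∈ K} p(k') z(k,k') + σ², and SINR_k(p) = p(k) z(k,k) / D_k(p). Suppose g̃ is a real number with 0 < g̃ ≤ g_k(p) and that the approximated constraint γ ∑_{k' ≠ k} p(k') z(k,k') / g̃ + γ σ² / g̃ ≤ 1 holds. Then the original constraint 1 + SINR_k(p) ≥ γ holds. -/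
/-- Replacing the posynomial `g_k(p) = ∑_{k'} p k' z k k' + σ²` by a lower bound
`g̃ ≤ g_k(p)` in the approximated constraint yields a feasible point of the
original constraint `1 + SINR_k(p) ≥ γ`. -/
theorem approx_constraint_implies_original
    {K : Type*} [Fintype K] [DecidableEq K] (k : K)
    (p : K → ℝ) (hp : ∀ k', 0 < p k')
    (z : K → K → ℝ) (hz : ∀ i j, 0 ≤ z i j) (hzkk : 0 < z k k)
    (σsq : ℝ) (hσ : 0 < σsq) (γ : ℝ) (hγ : 0 < γ)
    (gt : ℝ) (hgt0 : 0 < gt)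
    (hgtle : gt ≤ (∑ k', p k' * z k k') + σsq)
    (happrox : γ * (∑ k' ∈ Finset.univ.erase k, p k' * z k k') / gt
        + γ * σsq / gt ≤ 1) :
    1 + p k * z k k / ((∑ k' ∈ Finset.univ.erase k, p k' * z k k') + σsq) ≥ γ := by
  set S := ∑ k' ∈ Finset.univ.erase k, p k' * z k k' with hS
  have hSnn : 0 ≤ S := Finset.sum_nonneg fun i _ => mul_nonneg (hp i).le (hz k i)
  have hD : 0 < S + σsq := by linarith
  have hsum : (∑ k', p k' * z k k') = S + p k * z k k := by
    rw [hS, ← Finset.sum_erase_add _ _ (Finset.mem_univ k)]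
  have h1 : γ * S / gt + γ * σsq / gt ≤ 1 := happrox
  have h2 : γ * (S + σsq) ≤ gt := by
    have h3 : (γ * S + γ * σsq) / gt ≤ 1 := by
      rw [add_div]; exact h1
    have := (div_le_one hgt0).mp h3
    linarith
  have h4 : γ * (S + σsq) ≤ S + σsq + p k * z k k := by
    rw [hsum] at hgtle; linarith
  rw [ge_iff_le, ← sub_nonneg]
  have : 1 + p k * z k k / (S + σsq) - γ = (S + σsq + p k * z k k - γ * (S + σsq)) / (S + σsq) := by
    field_simp
  rw [this]
  exact div_nonneg (by linarith) hD.le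
end

section
/- Let K be a finite index set, fix k ∈ K, let p : K → ℝ with p(k') > 0 for all k', let z : K × K → ℝ with z(k,k') ≥ 0 and z(k,k) > 0, let σ² > 0, and define D_k(p) = ∑_{k' ≠ k} p(k') z(k,k') + σ², g_k(p) = ∑_{k' ∈ K} p(k') z(k,k') + σ², and SINR_k(p) = p(k) z(k,k) / D_k(p). If the weights are chosen at the point p itself, i.e. μ₀ = σ²/g_k(p) and μ_{k'} = p(k') z(k,k')/g_k(p), and g̃_k(p) = (σ²/μ₀)^{μ₀} ∏_{k'∈K} (p(k') z(k,k')/μ_{k'})^{μ_{k'}}, then g̃_k(p)/D_k(p) = 1 + SINR_k(p); moreover for any valid positive weights summing to one, g̃_k(p)/D_k(p) ≤ 1 + SINR_k(p). -/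
/-- With weights chosen at the current point `p`, i.e. `μ₀ = σ²/g_k(p)` and
`μ k' = p k' z k k' / g_k(p)`, the approximate SINR value `g̃_k(p)/D_k(p)`
equals `1 + SINR_k(p)`; moreover, for any positive weights summing to one,
`g̃_k(p)/D_k(p) ≤ 1 + SINR_k(p)`. -/
theorem approx_sinr_eq_and_le
    {K : Type*} [Fintype K] [DecidableEq K] (k : K)
    (p : K → ℝ) (hp : ∀ k', 0 < p k')
    (z : K → K → ℝ) (hz : ∀ i j, 0 ≤ z i j) (hzkk : 0 < z k k)
    (σsq : ℝ) (hσ : 0 < σsq)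
    (D g SINR : ℝ)
    (hD : D = (∑ k' ∈ Finset.univ.erase k, p k' * z k k') + σsq)
    (hg : g = (∑ k', p k' * z k k') + σsq)
    (hSINR : SINR = p k * z k k / D) :
    ((σsq / (σsq / g)) ^ (σsq / g)
        * ∏ k', (p k' * z k k' / (p k' * z k k' / g)) ^ (p k' * z k k' / g)) / D
      = 1 + SINR
    ∧ ∀ (μ₀ : ℝ) (μ : K → ℝ), 0 < μ₀ → (∀ k', 0 < μ k') →
        μ₀ + ∑ k', μ k' = 1 →
        ((σsq / μ₀) ^ μ₀ * ∏ k', (p k' * z k k' / μ k') ^ (μ k')) / D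
          ≤ 1 + SINR := by
  have hD0 : 0 < D := by
    rw [hD]
    have : (0:ℝ) ≤ ∑ k' ∈ Finset.univ.erase k, p k' * z k k' :=
      Finset.sum_nonneg fun i _ => mul_nonneg (hp i).le (hz k i)
    linarith
  have hsum : (∑ k', p k' * z k k') =
      (∑ k' ∈ Finset.univ.erase k, p k' * z k k') + p k * z k k := by
    rw [Finset.sum_erase_add _ _ (Finset.mem_univ k)]
  have hgD : g = D + p k * z k k := by rw [hg, hD, hsum]; ring
  have hg0 : 0 < g := by
    have := mul_pos (hp k) hzkk; linarith
  have hgoal : g / D = 1 + SINR := by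
    rw [hSINR, hgD]; field_simp
  constructor
  · -- equality part
    have h1 : σsq / (σsq / g) = g := by
      rw [div_div_eq_mul_div, mul_comm, mul_div_assoc, div_self hσ.ne', mul_one]
    have h2 : ∀ k', (p k' * z k k' / (p k' * z k k' / g)) ^ (p k' * z k k' / g)
        = g ^ (p k' * z k k' / g) := by
      intro k'
      rcases eq_or_lt_of_le (hz k k') with h0 | h0
      · rw [← h0]
        simp [Real.rpow_zero]
      · have hx : 0 < p k' * z k k' := mul_pos (hp k') h0
        rw [div_div_eq_mul_div, mul_comm, mul_div_assoc, div_self hx.ne', mul_one]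
    rw [h1]
    rw [Finset.prod_congr rfl (fun k' _ => h2 k')]
    rw [← Real.rpow_sum_of_pos hg0, ← Real.rpow_add hg0]
    have hexp : σsq / g + ∑ k', p k' * z k k' / g = 1 := by
      rw [← Finset.sum_div, add_comm, ← add_div, ← hg, div_self hg0.ne']
    rw [hexp, Real.rpow_one, hgoal]
  · -- inequality part
    intro μ₀ μ hμ₀ hμ hμsum
    rw [← hgoal]
    apply div_le_div_of_nonneg_right (c := D) ?_ hD0.le
    -- show product ≤ g via weighted AM-GM over Option K
    have key := Real.geom_mean_le_arith_mean_weighted (Finset.univ : Finset (Option K))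
      (fun o => Option.elim o μ₀ μ)
      (fun o => Option.elim o (σsq / μ₀) (fun k' => p k' * z k k' / μ k'))
      (fun i _ => by cases i with
        | none => exact hμ₀.le
        | some k' => exact (hμ k').le)
      (by simpa [Fintype.sum_option] using hμsum)
      (fun i _ => by cases i with
        | none => exact (div_pos hσ hμ₀).le
        | some k' => exact div_nonneg (mul_nonneg (hp k').le (hz k k')) (hμ k').le)
    rw [Fintype.prod_option, Fintype.sum_option] at key
    simp only [Option.elim] at key
    refine key.trans_eq ?_
    rw [hg, mul_div_cancel₀ _ hμ₀.ne', add_comm]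
    congr 1
    exact Finset.sum_congr rfl fun k' _ => mul_div_cancel₀ _ (hμ k').ne'
end
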